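/- In a finite DAG, if a vertex X has exactly one source ancestor S, then Φ(X) ⊆ Φ(S), S ∈ Φ(X), and S is the only source contained in Φ(X) (so removing Φ(X) from the vertex set removes exactly one source). -/

import Mathlib

/-- Two vertices are dependent if they share a common ancestor
(ancestorship via the reflexive-transitive closure of the edge relation). -/
def Dep {V : Type*} (E : V → V → Prop) (x y : V) : Prop :=
  ∃ a, Relation.ReflTransGen E a x ∧ Relation.ReflTransGen E a y

/-- The dependence set of a vertex: all vertices dependent on it. -/
def Phi {V : Type*} (E : V → V → Prop) (x : V) : Set V := {y | Dep E x y}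

/-! Finiteness and acyclicity make the edge relation well-founded, so every ancestor of `X` has a
source ancestor, which is then a source ancestor of `X` and hence `S`; thus `S` is itself a common
ancestor for any pair witnessing `y ∈ Φ(X)`. A source has no ancestor but itself, so a source in
`Φ(X)` is an ancestor of `X`. -/

section

open Relation

variable {V : Type*} {E : V → V → Prop}

theorem wellFounded_of_acyclic [Finite V] (hacyc : ∀ a, ¬ TransGen E a a) : WellFounded E :=
  have : IsTrans V (TransGen E) := ⟨fun _ _ _ => TransGen.trans⟩
  have : Std.Irrefl (TransGen E) := ⟨hacyc⟩
  Subrelation.wf TransGen.single (Finite.wellFounded_of_trans_of_irrefl _)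

/-- A minimal ancestor is a source, since any predecessor of it would be a smaller ancestor. -/
theorem WellFounded.exists_source_reflTransGen (hwf : WellFounded E) (a : V) :
    ∃ s, (∀ A, ¬ E A s) ∧ ReflTransGen E s a := by
  obtain ⟨s, hsa, hmin⟩ := hwf.has_min {s | ReflTransGen E s a} ⟨a, .refl⟩
  exact ⟨s, fun A hAs => hmin A (.head hAs hsa) hAs, hsa⟩

theorem eq_of_reflTransGen_of_source {a t : V} (ht : ∀ A, ¬ E A t)
    (h : ReflTransGen E a t) : a = t := by
  rcases h.cases_tail with rfl | ⟨c, -, hct⟩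
  · rfl
  · exact absurd hct (ht c)

end

theorem unique_source_ancestor_dep_set_general {V : Type*} [Fintype V] (E : V → V → Prop)
    (hdag : Irreflexive (Relation.TransGen E))
    (X S : V) (hanc : Relation.ReflTransGen E S X)
    (huniq : ∀ T : V, (∀ A, ¬ E A T) → Relation.ReflTransGen E T X → T = S) :
    Phi E X ⊆ Phi E S ∧ S ∈ Phi E X ∧
      ∀ T ∈ Phi E X, (∀ A, ¬ E A T) → T = S := by
  refine ⟨?_, ⟨S, hanc, .refl⟩, ?_⟩
  · rintro y ⟨a, haX, hay⟩
    obtain ⟨s, hs, hsa⟩ := (wellFounded_of_acyclic hdag).exists_source_reflTransGen a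
    obtain rfl : s = S := huniq s hs (hsa.trans haX)
    exact ⟨s, .refl, hsa.trans hay⟩
  · rintro T ⟨a, haX, haT⟩ hT
    obtain rfl := eq_of_reflTransGen_of_source hT haT
    exact huniq a hT haX

/-- If a vertex X has exactly one source ancestor S, then Φ(X) ⊆ Φ(S),
S ∈ Φ(X), and S is the only source contained in Φ(X). -/
theorem unique_source_ancestor_dep_set {V : Type*} [Fintype V] (E : V → V → Prop)
    (hdag : Irreflexive (Relation.TransGen E))
    (X S : V) (hS : ∀ A, ¬ E A S) (hanc : Relation.ReflTransGen E S X)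
    (huniq : ∀ T : V, (∀ A, ¬ E A T) → Relation.ReflTransGen E T X → T = S) :
    Phi E X ⊆ Phi E S ∧ S ∈ Phi E X ∧
      ∀ T ∈ Phi E X, (∀ A, ¬ E A T) → T = S :=
  unique_source_ancestor_dep_set_general E hdag X S hanc huniq
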